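/- If σ_a and σ_b are reasonable strategies of player 0 such that no strict improvement of σ_b lies in σ_a (S_{σ_b} ∩ σ_a = ∅), then σ_a ≼ σ_b, i.e., V_{σ_a}(s) ≼ V_{σ_b}(s) for all nodes s. -/

import Mathlib

open scoped Classical

/-- The order `≺` on integer color profiles `ℤ^d`: compare at the largest index where
they differ; at an even index the larger entry wins, at an odd index the smaller one. -/
def FinLt {d : ℕ} (p q : Fin d → ℤ) : Prop :=
  ∃ k : Fin d, p k ≠ q k ∧ (∀ j, k < j → p j = q j) ∧
    ((Even (k : ℕ) ∧ p k < q k) ∨ (Odd (k : ℕ) ∧ q k < p k))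

/-- Reflexive closure `≼` of `FinLt`. -/
def FinLe {d : ℕ} (p q : Fin d → ℤ) : Prop := p = q ∨ FinLt p q

/-- Color profiles: `ℤ^d` together with `-∞` (`bot`) and `∞` (`top`). -/
inductive Prof (d : ℕ) where
  | bot : Prof d
  | fin : (Fin d → ℤ) → Prof d
  | top : Prof d

/-- The order `≺` on color profiles: `-∞` is the bottom element, `∞` the top element,
finite profiles are compared by `FinLt`. -/
def Prof.Lt {d : ℕ} : Prof d → Prof d → Prop
  | .bot, .bot => False
  | .bot, .fin _ => True
  | .bot, .top => True
  | .fin _, .bot => False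
  | .fin p, .fin q => FinLt p q
  | .fin _, .top => True
  | .top, _ => False

/-- Reflexive closure `≼` of `Prof.Lt`. -/
def Prof.Le {d : ℕ} (p q : Prof d) : Prop := p = q ∨ Prof.Lt p q

/-- Adding a vector in `ℤ^d` to a profile; `±∞` are absorbing. -/
def Prof.add {d : ℕ} : Prof d → (Fin d → ℤ) → Prof d
  | .bot, _ => .bot
  | .fin p, q => .fin (p + q)
  | .top, _ => .top

/-- A parity game arena: a finite directed graph, each node owned by player 0 or 1 and
colored by a color in `{0,…,d-1}`; every node has at least one successor. -/
structure PGA (V : Type) (d : ℕ) where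
  edge : V → V → Prop
  owner : V → Fin 2
  color : V → Fin d
  succ : ∀ v, ∃ w, edge v w

variable {V : Type} {d : ℕ}

/-- The profile `℘(s)` of a single vertex: the unit vector at its color. -/
def unitProf (A : PGA V d) (s : V) : Fin d → ℤ := fun k => if A.color s = k then 1 else 0

/-- The color profile `℘(π)` of a finite sequence of vertices: how often each color occurs. -/
def listProf (A : PGA V d) (L : List V) : Fin d → ℤ := fun k => ((L.map A.color).count k : ℤ)

/-- `℘(s) + p` for a vertex `s` and a profile `p`. -/
def addV (A : PGA V d) (s : V) (p : Prof d) : Prof d := p.add (unitProf A s)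

/-- Edges of the escape arena `A_⊥` over `Option V`, where `none` is the sink `⊥`:
all edges of `A`, plus an edge from every player-0 node to `⊥`; `⊥` has no outgoing edges. -/
def EdgeB (A : PGA V d) : Option V → Option V → Prop
  | some u, some v => A.edge u v
  | some u, none => A.owner u = 0
  | none, _ => False

/-- A (memoryless, possibly non-deterministic) strategy of player 0 in `A_⊥`:
a set of player-0 edges giving every player-0 node at least one successor. -/
def Strategy0 (A : PGA V d) (σ : V → Option V → Prop) : Prop :=
  (∀ s t, σ s t → A.owner s = 0 ∧ EdgeB A (some s) t) ∧
  (∀ s, A.owner s = 0 → ∃ t, σ s t)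

/-- A (memoryless, possibly non-deterministic) strategy of player 1 (who never moves to `⊥`). -/
def Strategy1 (A : PGA V d) (τ : V → V → Prop) : Prop :=
  (∀ s t, τ s t → A.owner s = 1 ∧ A.edge s t) ∧
  (∀ s, A.owner s = 1 → ∃ t, τ s t)

/-- A strategy is deterministic if it picks at most one successor per node. -/
def Deterministic (σ : V → Option V → Prop) : Prop :=
  ∀ s t t', σ s t → σ s t' → t = t'

/-- Edges of `A_⊥` restricted to a player-0 strategy `σ` that stay inside `V`
(cycles of `A_⊥|σ` never pass through `⊥`). -/
def EdgeSig (A : PGA V d) (σ : V → Option V → Prop) (u v : V) : Prop :=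
  (A.owner u = 1 ∧ A.edge u v) ∨ σ u (some v)

/-- A (nonempty) cycle in `A_⊥|σ`: consecutive edges plus the wrap-around edge. -/
def CycleIn (A : PGA V d) (σ : V → Option V → Prop) (L : List V) : Prop :=
  L ≠ [] ∧ List.Chain' (EdgeSig A σ) L ∧
  ∀ a b, L.head? = some a → L.getLast? = some b → EdgeSig A σ b a

/-- A player-0 strategy is reasonable if `A_⊥|σ` has no 1-dominated cycle,
i.e. on every cycle the dominating (maximal) color is even. -/
def Reasonable (A : PGA V d) (σ : V → Option V → Prop) : Prop :=
  ∀ L, CycleIn A σ L → ∀ v ∈ L, (∀ w ∈ L, A.color w ≤ A.color v) → Even ((A.color v : ℕ))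

/-- One step of a play in `A_⊥` with player 0 using `σ` and player 1 using `τ`;
the sink `⊥` is absorbing. -/
def PlayStep (A : PGA V d) (σ : V → Option V → Prop) (τ : V → V → Prop) :
    Option V → Option V → Prop
  | none, y => y = none
  | some u, y => (A.owner u = 0 ∧ σ u y) ∨ (A.owner u = 1 ∧ ∃ v, y = some v ∧ τ u v)

/-- A play from `s` in `A_⊥|σ,τ` (modelled with absorbing sink). -/
def IsPlay (A : PGA V d) (σ : V → Option V → Prop) (τ : V → V → Prop)
    (s : V) (π : ℕ → Option V) : Prop :=
  π 0 = some s ∧ ∀ n, PlayStep A σ τ (π n) (π (n + 1))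

/-- One step of a play in `A_⊥` with player 0 using `σ`, player 1 unconstrained. -/
def PlayStepB (A : PGA V d) (σ : V → Option V → Prop) : Option V → Option V → Prop
  | none, y => y = none
  | some u, y => (A.owner u = 0 ∧ σ u y) ∨ (A.owner u = 1 ∧ ∃ v, y = some v ∧ A.edge u v)

/-- A play from `s` in `A_⊥|σ` against an arbitrary player 1. -/
def IsPlayB (A : PGA V d) (σ : V → Option V → Prop) (s : V) (π : ℕ → Option V) : Prop :=
  π 0 = some s ∧ ∀ n, PlayStepB A σ (π n) (π (n + 1))

/-- Color `k` occurs at position `n` of the play `π`. -/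
def ColorAt (A : PGA V d) (π : ℕ → Option V) (n : ℕ) (k : Fin d) : Prop :=
  ∃ v, π n = some v ∧ A.color v = k

/-- An infinite play of `A_⊥` (never reaching `⊥`) is won by player 0 iff the maximal color
occurring infinitely often is even. -/
def Won0B (A : PGA V d) (π : ℕ → Option V) : Prop :=
  ∃ k : Fin d, Even ((k : ℕ)) ∧ (∀ N, ∃ n ≥ N, ColorAt A π n k) ∧
    ∀ j : Fin d, k < j → ∃ N, ∀ n ≥ N, ¬ ColorAt A π n j

/-- The value `℘(π)` of a play in `A_⊥`: for a finite play (reaching `⊥`), the color profile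
of its vertices; for an infinite play, `∞` if player 0 wins it and `-∞` otherwise. -/
noncomputable def PlayValue (A : PGA V d) (π : ℕ → Option V) : Prof d :=
  if h : ∃ n, π n = none then
    .fin (fun k =>
      (((Finset.range (Nat.find h)).filter (fun n => ColorAt A π n k)).card : ℤ))
  else if Won0B A π then .top else .bot

/-- `p` is the `≺`-maximum of the set `S` of profiles. -/
def IsMaxOf {d : ℕ} (S : Set (Prof d)) (p : Prof d) : Prop := p ∈ S ∧ ∀ q ∈ S, Prof.Le q p

/-- `p` is the `≺`-minimum of the set `S` of profiles. -/
def IsMinOf {d : ℕ} (S : Set (Prof d)) (p : Prof d) : Prop := p ∈ S ∧ ∀ q ∈ S, Prof.Le p q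

/-- `W` is the valuation `𝒱_σ` of the player-0 strategy `σ`: `W(⊥) = ō`, and `W(s)` is the
`≺`-minimal value player 1 can guarantee (by a memoryless strategy) in any play from `s`
in `A_⊥|σ`. -/
def IsValuation (A : PGA V d) (σ : V → Option V → Prop) (W : Option V → Prof d) : Prop :=
  W none = .fin 0 ∧
  ∀ s : V, IsMinOf
    { p | ∃ τ, Strategy1 A τ ∧
        IsMaxOf { q | ∃ π, IsPlay A σ τ s π ∧ q = PlayValue A π } p }
    (W (some s))

/-- `(s,t)` is an improvement of `σ` w.r.t. the valuation `W`: a player-0 edge with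
`W(s) ≼ ℘(s) + W(t)`.  `I_σ` is the set (strategy) of all improvements. -/
def Improvement (A : PGA V d) (W : Option V → Prof d) (s : V) (t : Option V) : Prop :=
  A.owner s = 0 ∧ EdgeB A (some s) t ∧ Prof.Le (W (some s)) (addV A s (W t))

/-- `(s,t)` is a strict improvement of `σ` w.r.t. `W`: a player-0 edge with
`W(s) ≺ ℘(s) + W(t)`. -/
def StrictImp (A : PGA V d) (W : Option V → Prof d) (s : V) (t : Option V) : Prop :=
  A.owner s = 0 ∧ EdgeB A (some s) t ∧ Prof.Lt (W (some s)) (addV A s (W t))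

/-- A memoryless strategy of player 0 in the original parity game arena `A`. -/
def Strat0A (A : PGA V d) (σ : V → V → Prop) : Prop :=
  (∀ s t, σ s t → A.owner s = 0 ∧ A.edge s t) ∧ (∀ s, A.owner s = 0 → ∃ t, σ s t)

/-- A play in `A` from `s` where player 0 follows `σ` and player 1 is unconstrained. -/
def PlayA (A : PGA V d) (σ : V → V → Prop) (s : V) (π : ℕ → V) : Prop :=
  π 0 = s ∧ ∀ n, (A.owner (π n) = 0 → σ (π n) (π (n + 1))) ∧
    (A.owner (π n) = 1 → A.edge (π n) (π (n + 1)))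

/-- Parity winning condition in `A` for player 0: the maximal color seen infinitely often is even. -/
def Won0A (A : PGA V d) (π : ℕ → V) : Prop :=
  ∃ k : Fin d, Even ((k : ℕ)) ∧ (∀ N, ∃ n ≥ N, A.color (π n) = k) ∧
    ∀ j : Fin d, k < j → ∃ N, ∀ n ≥ N, A.color (π n) ≠ j

/-- Player 0 wins the node `s` of the parity game arena `A` (with a memoryless strategy). -/
def Win0 (A : PGA V d) (s : V) : Prop :=
  ∃ σ, Strat0A A σ ∧ ∀ π, PlayA A σ s π → Won0A A π

/-- An acyclic path of `A_⊥` terminating in `⊥`: pairwise distinct vertices, consecutive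
edges of `A`, and the last vertex owned by player 0 (so it has the edge to `⊥`). -/
def AcyclicToBot (A : PGA V d) (L : List V) : Prop :=
  L.Nodup ∧ List.Chain' A.edge L ∧ ∀ b, L.getLast? = some b → A.owner b = 0


/-!
Let `τ` be the strategy of player 1 that always moves to a `𝒱_{σ_b}`-minimal successor. Since
no edge of `σ_a` strictly improves `σ_b`, and `𝒱_{σ_b}` is optimal for player 1, every step
`x → y` of `A_⊥|σ_a,τ` satisfies `℘(x) + 𝒱_{σ_b}(y) ≼ 𝒱_{σ_b}(x)`. Telescoping bounds the value
of every play from `s` by `𝒱_{σ_b}(s)`: for a finite play directly; an infinite play revisits a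
node, the loop in between has profile `≻ 0` because `σ_a` is reasonable, and this is compatible
with the telescoped inequality only if `𝒱_{σ_b}` is `∞` there. The best play of `σ_a` against
`τ` bounds `𝒱_{σ_a}(s)` from above, so `𝒱_{σ_a}(s) ≼ 𝒱_{σ_b}(s)`. That best play exists since
a reasonable strategy either allows a lasso-shaped play, of value `∞`, or only plays of length
at most `|V|`.
-/

open Finset

namespace FinLt

variable {p q r : Fin d → ℤ}

theorem irrefl (p : Fin d → ℤ) : ¬ FinLt p p := fun ⟨_, hne, _⟩ => hne rfl

theorem trans (hpq : FinLt p q) (hqr : FinLt q r) : FinLt p r := by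
  obtain ⟨k, hk, hpq_above, hpq_k⟩ := hpq
  obtain ⟨l, hl, hqr_above, hqr_l⟩ := hqr
  rcases lt_trichotomy k l with hkl | rfl | hlk
  · refine ⟨l, hpq_above l hkl ▸ hl, fun j hj => ?_, hpq_above l hkl ▸ hqr_l⟩
    exact (hpq_above j (hkl.trans hj)).trans (hqr_above j hj)
  · refine ⟨k, ?_, fun j hj => (hpq_above j hj).trans (hqr_above j hj), ?_⟩ <;>
      simp only [Nat.even_iff, Nat.odd_iff] at * <;> omega
  · refine ⟨k, hqr_above k hlk ▸ hk, fun j hj => ?_, hqr_above k hlk ▸ hpq_k⟩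
    exact (hpq_above j hj).trans (hqr_above j (hlk.trans hj))

theorem lt_or_gt_of_ne (h : p ≠ q) : FinLt p q ∨ FinLt q p := by
  obtain ⟨k, hk, hk_max⟩ := (univ.filter fun j => p j ≠ q j).exists_max_image id
    (by simpa [Finset.Nonempty, funext_iff] using h)
  simp only [mem_filter, mem_univ, true_and, id] at hk hk_max
  have habove : ∀ j, k < j → p j = q j :=
    fun j hj => by_contra fun hj' => (hk_max j hj').not_gt hj
  rcases Nat.even_or_odd (k : ℕ) with hpar | hpar <;> rcases hk.lt_or_gt with hlt | hlt
  · exact .inl ⟨k, hk, habove, .inl ⟨hpar, hlt⟩⟩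
  · exact .inr ⟨k, hk.symm, fun j hj => (habove j hj).symm, .inl ⟨hpar, hlt⟩⟩
  · exact .inr ⟨k, hk.symm, fun j hj => (habove j hj).symm, .inr ⟨hpar, hlt⟩⟩
  · exact .inl ⟨k, hk, habove, .inr ⟨hpar, hlt⟩⟩

theorem add_right (h : FinLt p q) (r : Fin d → ℤ) : FinLt (p + r) (q + r) := by
  obtain ⟨k, hk, habove, hpar⟩ := h
  exact ⟨k, by simpa using hk, fun j hj => by simp [habove j hj], by simpa using hpar⟩

end FinLt

namespace Prof

instance : IsStrictTotalOrder (Prof d) Prof.Lt where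
  irrefl p := by cases p <;> simp [Prof.Lt, FinLt.irrefl]
  trans p q r := by cases p <;> cases q <;> cases r <;> simp [Prof.Lt]; exact FinLt.trans
  trichotomous p q := by
    cases p <;> cases q <;> simp [Prof.Lt]
    exact fun h₁ h₂ => by_contra fun h => (FinLt.lt_or_gt_of_ne h).elim h₁ h₂

noncomputable instance : LinearOrder (Prof d) := linearOrderOfSTO Prof.Lt

variable {p q : Prof d}

theorem le_def : p ≤ q ↔ p.Le q := Iff.rfl

theorem bot_le (p : Prof d) : Prof.bot ≤ p := by cases p <;> simp [le_def, Prof.Le, Prof.Lt]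

theorem le_top (p : Prof d) : p ≤ Prof.top := by cases p <;> simp [le_def, Prof.Le, Prof.Lt]

theorem add_zero (p : Prof d) : p.add 0 = p := by cases p <;> simp [Prof.add]

theorem add_add (p : Prof d) (r s : Fin d → ℤ) : (p.add r).add s = p.add (r + s) := by
  cases p <;> simp [Prof.add, add_assoc]

theorem add_le_add_right (h : p ≤ q) (r : Fin d → ℤ) : p.add r ≤ q.add r := by
  rcases h with rfl | h
  · exact le_rfl
  cases p <;> cases q <;> simp_all [le_def, Prof.Le, Prof.Lt, Prof.add]
  exact .inr (h.add_right r)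

theorem add_sum_Ico_le {W : ℕ → Prof d} {f : ℕ → Fin d → ℤ}
    (h : ∀ n, (W (n + 1)).add (f n) ≤ W n) {m n : ℕ} (hmn : m ≤ n) :
    (W n).add (∑ i ∈ Ico m n, f i) ≤ W m := by
  induction n, hmn using Nat.le_induction with
  | base => simp [add_zero]
  | succ n hmn ih =>
    rw [sum_Ico_succ_top hmn, _root_.add_comm _ (f n), ← add_add]
    exact (add_le_add_right (h n) _).trans ih

end Prof

theorem IsMaxOf.le {S : Set (Prof d)} {p q : Prof d} (h : IsMaxOf S p) (hq : q ∈ S) : q ≤ p :=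
  h.2 q hq

theorem IsMinOf.le {S : Set (Prof d)} {p q : Prof d} (h : IsMinOf S p) (hq : q ∈ S) : p ≤ q :=
  h.2 q hq

def nodeProf (A : PGA V d) (x : Option V) : Fin d → ℤ :=
  fun k => if ∃ v, x = some v ∧ A.color v = k then 1 else 0

theorem listProf_eq_sum (A : PGA V d) (L : List V) :
    listProf A L = (L.map (unitProf A)).sum := by
  induction L with
  | nil => funext k; simp [listProf]
  | cons v L ih =>
    rw [List.map_cons, List.sum_cons, ← ih]
    funext k
    simp [listProf, unitProf, List.count_cons, _root_.add_comm]

section Plays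

variable {A : PGA V d} {σ : V → Option V → Prop} {τ : V → V → Prop} {π : ℕ → Option V}

@[simp] theorem nodeProf_none : nodeProf A none = 0 := by
  funext k; simp [nodeProf]

@[simp] theorem nodeProf_some (u : V) : nodeProf A (some u) = unitProf A u := by
  funext k; simp [nodeProf, unitProf]

theorem nodeProf_nonneg (x : Option V) (k : Fin d) : 0 ≤ nodeProf A x k := by
  unfold nodeProf; split_ifs <;> norm_num

theorem nodeProf_le_one (x : Option V) (k : Fin d) : nodeProf A x k ≤ 1 := by
  unfold nodeProf; split_ifs <;> norm_num

theorem nodeProf_eq_zero_iff {n : ℕ} {k : Fin d} :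
    nodeProf A (π n) k = 0 ↔ ¬ ColorAt A π n k := by
  simp [nodeProf, ColorAt]

theorem playValue_of_exists_eq_none (h : ∃ n, π n = none) :
    PlayValue A π = .fin (∑ i ∈ range (Nat.find h), nodeProf A (π i)) := by
  rw [PlayValue, dif_pos h]
  congr 1
  funext k
  simp only [nodeProf, ColorAt, Finset.sum_apply, Finset.sum_boole]
  congr

theorem won0B_tail_iff : Won0B A (fun n => π (n + 1)) ↔ Won0B A π := by
  have hshift (k : Fin d) :
      (∃ᶠ n in Filter.atTop, ColorAt A (fun n => π (n + 1)) n k) ↔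
        ∃ᶠ n in Filter.atTop, ColorAt A π n k := by
    conv_rhs => rw [← Filter.map_add_atTop_eq_nat 1, Filter.frequently_map]
    rfl
  simp only [Won0B, ge_iff_le, ← Filter.frequently_atTop, ← Filter.eventually_atTop,
    ← Filter.not_frequently, hshift]

theorem playValue_eq_tail_add {u : V} (h0 : π 0 = some u) :
    PlayValue A π = (PlayValue A (fun n => π (n + 1))).add (unitProf A u) := by
  by_cases hend : ∃ n, π (n + 1) = none
  · have hend' : ∃ n, π n = none := ⟨_, hend.choose_spec⟩
    rw [playValue_of_exists_eq_none hend', playValue_of_exists_eq_none hend,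
      Nat.find_comp_succ hend' hend (by simp [h0]), sum_range_succ', h0, nodeProf_some]
    rfl
  · have hend' : ¬ ∃ n, π n = none := by
      rintro ⟨_ | n, hn⟩
      exacts [by simp [h0] at hn, hend ⟨n, hn⟩]
    rw [PlayValue, PlayValue, dif_neg hend, dif_neg hend', won0B_tail_iff]
    split_ifs <;> rfl

theorem exists_isPlay (hσ : Strategy0 A σ) (hτ : Strategy1 A τ) (s : V) :
    ∃ π, IsPlay A σ τ s π := by
  have hnext : ∀ x, ∃ y, PlayStep A σ τ x y := by
    rintro (_ | u)
    · exact ⟨none, rfl⟩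
    · rcases Fin.exists_fin_two.mp ⟨A.owner u, rfl⟩ with h | h
      · obtain ⟨t, ht⟩ := hσ.2 u h
        exact ⟨t, .inl ⟨h, ht⟩⟩
      · obtain ⟨t, ht⟩ := hτ.2 u h
        exact ⟨some t, .inr ⟨h, t, rfl, ht⟩⟩
  choose next hnext using hnext
  exact ⟨fun n => next^[n] (some s), rfl, fun n => by
    simpa only [Function.iterate_succ_apply'] using hnext _⟩

theorem ne_none_of_playStep (hstep : ∀ n, PlayStep A σ τ (π n) (π (n + 1))) {m n : ℕ}
    (hnm : n ≤ m) (hm : π m ≠ none) : π n ≠ none := by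
  intro hn
  induction m, hnm using Nat.le_induction with
  | base => exact hm hn
  | succ m _ ih =>
    refine ih fun hm' => hm ?_
    simpa [hm', PlayStep] using hstep m

theorem exists_lt_eq_some_of_ne_none [Fintype V] (h : ∀ n ≤ Fintype.card V, π n ≠ none) :
    ∃ m n u, m < n ∧ π m = some u ∧ π n = some u := by
  choose g hg using fun i : Fin (Fintype.card V + 1) =>
    Option.ne_none_iff_exists'.mp (h i (by omega))
  obtain ⟨i, j, hij, hgij⟩ := Fintype.exists_ne_map_eq_of_card_lt g (by simp)
  rcases Fin.lt_or_lt_of_ne hij with hlt | hlt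
  · exact ⟨i, j, g i, hlt, hg i, hgij ▸ hg j⟩
  · exact ⟨j, i, g i, hlt, hgij ▸ hg j, hg i⟩

theorem EdgeSig.of_playStep (hτ : Strategy1 A τ) {a b : V}
    (h : PlayStep A σ τ (some a) (some b)) : EdgeSig A σ a b := by
  rcases h with ⟨-, h⟩ | ⟨h1, v, hv, h⟩
  · exact .inr h
  · cases hv
    exact .inl ⟨h1, (hτ.1 _ _ h).2⟩

theorem cycleIn_ofFn {g : ℕ → V} {c : ℕ} (hc : 0 < c)
    (hg : ∀ i < c, EdgeSig A σ (g i) (g (i + 1))) (hloop : g c = g 0) :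
    CycleIn A σ (List.ofFn fun i : Fin c => g i) := by
  refine ⟨by simp [hc.ne'], List.isChain_ofFn.mpr fun i hi => hg i (by omega),
    fun a b ha hb => ?_⟩
  simp only [List.head?_eq_getElem?, List.getLast?_eq_getElem?, List.length_ofFn,
    List.getElem?_ofFn, hc, Nat.sub_lt, zero_lt_one, ↓reduceDIte, Option.some_inj] at ha hb
  subst ha hb
  simpa [Nat.sub_add_cancel hc, hloop] using hg (c - 1) (by omega)

theorem Reasonable.zero_finLt_listProf (hr : Reasonable A σ) {L : List V}
    (hL : CycleIn A σ L) : FinLt 0 (listProf A L) := by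
  obtain ⟨v, hv, hv_max⟩ := L.toFinset.exists_max_image A.color
    (List.toFinset_nonempty_iff L |>.mpr hL.1)
  rw [List.mem_toFinset] at hv
  replace hv_max : ∀ w ∈ L, A.color w ≤ A.color v :=
    fun w hw => hv_max w (List.mem_toFinset.mpr hw)
  have hcount : 0 < listProf A L (A.color v) := by
    simpa [listProf] using List.mem_map_of_mem (f := A.color) hv
  refine ⟨A.color v, hcount.ne, fun j hj => Eq.symm ?_, .inl ⟨hr L hL v hv hv_max, hcount⟩⟩
  simpa [listProf, List.count_eq_zero] using fun w hw => (hv_max w hw).trans_lt hj |>.ne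

theorem Reasonable.zero_finLt_sum_Ico (hr : Reasonable A σ) (hτ : Strategy1 A τ)
    (hstep : ∀ n, PlayStep A σ τ (π n) (π (n + 1))) {m n : ℕ} {u : V} (hmn : m < n)
    (hm : π m = some u) (hn : π n = some u) :
    FinLt 0 (∑ i ∈ Ico m n, nodeProf A (π i)) := by
  set g : ℕ → V := fun i => (π (m + i)).getD u
  have hg : ∀ i ≤ n - m, π (m + i) = some (g i) := fun i hi => by
    obtain ⟨v, hv⟩ := Option.ne_none_iff_exists'.mp
      (ne_none_of_playStep hstep (by omega : m + i ≤ n) (by simp [hn]))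
    simp [g, hv]
  have hcycle : CycleIn A σ (List.ofFn fun i : Fin (n - m) => g i) := by
    refine cycleIn_ofFn (by omega) (fun i hi => ?_) ?_
    · have := hstep (m + i)
      rw [hg i hi.le, add_assoc, hg (i + 1) hi] at this
      exact EdgeSig.of_playStep hτ this
    · have h₁ := hg (n - m) le_rfl
      have h₀ := hg 0 (Nat.zero_le _)
      rw [Nat.add_sub_cancel' hmn.le, hn] at h₁
      rw [add_zero, hm] at h₀
      exact Option.some_inj.mp (h₁.symm.trans h₀)
  have hsum : listProf A (List.ofFn fun i : Fin (n - m) => g i) =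
      ∑ i ∈ Ico m n, nodeProf A (π i) := by
    rw [listProf_eq_sum, List.map_ofFn, List.sum_ofFn, sum_Ico_eq_sum_range,
      ← Fin.sum_univ_eq_sum_range]
    refine sum_congr rfl fun i _ => ?_
    rw [hg i i.2.le, nodeProf_some]
    rfl
  exact hsum ▸ hr.zero_finLt_listProf hcycle

end Plays

/-- The positions `0, 1, …, n + p - 1, n, …, n + p - 1, n, …` of a lasso with stem `n` and
loop length `p`. -/
def lassoIndex (n p : ℕ) : ℕ → ℕ
  | 0 => 0
  | m + 1 => if lassoIndex n p m + 1 = n + p then n else lassoIndex n p m + 1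

namespace lassoIndex

variable {n p m : ℕ}

theorem eq_self_of_lt (h : m < n + p) : lassoIndex n p m = m := by
  induction m with
  | zero => rfl
  | succ m ih => simp [lassoIndex, ih (by omega), h.ne]

theorem lt_add (hp : 0 < p) : lassoIndex n p m < n + p := by
  induction m with
  | zero => show 0 < n + p; omega
  | succ m ih => simp only [lassoIndex]; split_ifs <;> omega

theorem add_period (hp : 0 < p) (hm : n ≤ m) :
    lassoIndex n p (m + p) = lassoIndex n p m := by
  induction m, hm using Nat.le_induction with
  | base =>
    obtain ⟨q, rfl⟩ : ∃ q, p = q + 1 := ⟨p - 1, by omega⟩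
    simp [← add_assoc, lassoIndex, eq_self_of_lt (show n + q < n + (q + 1) by omega),
      eq_self_of_lt (show n < n + (q + 1) by omega)]
  | succ m _ ih => rw [show m + 1 + p = m + p + 1 by omega, lassoIndex, ih, lassoIndex]

theorem apply_succ {α : Type*} {f : ℕ → α} (hf : f (n + p) = f n) (m : ℕ) :
    f (lassoIndex n p (m + 1)) = f (lassoIndex n p m + 1) := by
  rw [lassoIndex]
  split_ifs with h
  · rw [h, hf]
  · rfl

end lassoIndex

theorem won0B_of_periodic {A : PGA V d} {ρ : ℕ → Option V} {n p : ℕ}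
    (hper : ∀ m ≥ n, ρ (m + p) = ρ m)
    (hpos : FinLt 0 (∑ i ∈ Ico n (n + p), nodeProf A (ρ i))) : Won0B A ρ := by
  obtain ⟨k, hk, habove, hpar⟩ := hpos
  simp only [Pi.zero_apply, Finset.sum_apply] at hk habove hpar
  have heven : Even (k : ℕ) := by
    rcases hpar with ⟨he, -⟩ | ⟨-, hneg⟩
    exacts [he, absurd hneg (sum_nonneg fun i _ => nodeProf_nonneg (ρ i) k).not_gt]
  have hp : 0 < p := Nat.pos_of_ne_zero fun hp => hk (by simp [hp])
  have hiter : ∀ m ≥ n, ∀ t, ρ (m + t * p) = ρ m := fun m hm t => by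
    induction t with
    | zero => simp
    | succ t ih => rw [add_mul, one_mul, ← add_assoc, hper _ (by omega), ih]
  have hreduce : ∀ m ≥ n, ∃ i ∈ Ico n (n + p), ρ m = ρ i := fun m hm => by
    induction m using Nat.strong_induction_on with
    | _ m ih =>
      by_cases hmp : m < n + p
      · exact ⟨m, mem_Ico.mpr ⟨hm, hmp⟩, rfl⟩
      · obtain ⟨i, hi, hρi⟩ := ih (m - p) (by omega) (by omega)
        exact ⟨i, hi, by rw [← hρi, ← hper (m - p) (by omega), Nat.sub_add_cancel (by omega)]⟩
  obtain ⟨i, hi, hik⟩ := exists_ne_zero_of_sum_ne_zero (Ne.symm hk)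
  refine ⟨k, heven, fun N => ⟨i + N * p, by nlinarith, ?_⟩, fun j hj => ⟨n, fun m hm => ?_⟩⟩
  · rw [← not_not (a := ColorAt _ _ _ _), ← nodeProf_eq_zero_iff, hiter i (mem_Ico.mp hi).1 N]
    exact hik
  · obtain ⟨i, hi, hρi⟩ := hreduce m hm
    have hzero := (sum_eq_zero_iff_of_nonneg fun i _ => nodeProf_nonneg (ρ i) j).mp
      (habove j hj).symm i hi
    rwa [← hρi, nodeProf_eq_zero_iff] at hzero

section Values

variable {A : PGA V d} {σ : V → Option V → Prop} {τ : V → V → Prop}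

theorem Reasonable.exists_playValue_eq_top (hr : Reasonable A σ) (hτ : Strategy1 A τ)
    {s u : V} {π : ℕ → Option V} (hπ : IsPlay A σ τ s π) {m n : ℕ} (hmn : m < n)
    (hm : π m = some u) (hn : π n = some u) :
    ∃ ρ, IsPlay A σ τ s ρ ∧ PlayValue A ρ = .top := by
  obtain ⟨p, rfl⟩ : ∃ p, n = m + p := ⟨n - m, by omega⟩
  have hp : 0 < p := by omega
  set ρ := fun i => π (lassoIndex m p i)
  have hρstep : ∀ i, PlayStep A σ τ (ρ i) (ρ (i + 1)) := fun i => by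
    simp only [ρ, lassoIndex.apply_succ (hn.trans hm.symm)]
    exact hπ.2 _
  have hρ_ne_none : ¬ ∃ i, ρ i = none := fun ⟨i, hi⟩ =>
    ne_none_of_playStep hπ.2 (lassoIndex.lt_add hp).le (by simp [hn]) hi
  have hper : ∀ i ≥ m, ρ (i + p) = ρ i := fun i hi => by
    simp only [ρ, lassoIndex.add_period hp hi]
  have hρm : ρ m = some u := by
    simp [ρ, lassoIndex.eq_self_of_lt (show m < m + p by omega), hm]
  have hpos := hr.zero_finLt_sum_Ico hτ hρstep (show m < m + p by omega) hρm
    (hper m le_rfl ▸ hρm)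
  refine ⟨ρ, ⟨hπ.1, hρstep⟩, ?_⟩
  rw [PlayValue, dif_neg hρ_ne_none, if_pos (won0B_of_periodic hper hpos)]

variable [Fintype V]

theorem Reasonable.exists_isMaxOf_playValue (hr : Reasonable A σ) (hσ : Strategy0 A σ)
    (hτ : Strategy1 A τ) (s : V) :
    ∃ M, IsMaxOf {q | ∃ π, IsPlay A σ τ s π ∧ q = PlayValue A π} M ∧ M ≠ .bot := by
  by_cases hrep : ∃ π, IsPlay A σ τ s π ∧ ∃ m n u, m < n ∧ π m = some u ∧ π n = some u
  · obtain ⟨π, hπ, m, n, u, hmn, hm, hn⟩ := hrep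
    obtain ⟨ρ, hρ, hval⟩ := hr.exists_playValue_eq_top hτ hπ hmn hm hn
    exact ⟨.top, ⟨⟨ρ, hρ, hval.symm⟩, fun q _ => Prof.le_top q⟩, nofun⟩
  have hbounded : ∀ q ∈ {q | ∃ π, IsPlay A σ τ s π ∧ q = PlayValue A π},
      ∃ P, q = .fin P ∧ ∀ k, P k ∈ Set.Icc (0 : ℤ) (Fintype.card V) := by
    rintro q ⟨π, hπ, rfl⟩
    obtain ⟨N, hN, hπN⟩ : ∃ N ≤ Fintype.card V, π N = none := by
      by_contra! h
      exact hrep ⟨π, hπ, exists_lt_eq_some_of_ne_none h⟩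
    have hend : ∃ n, π n = none := ⟨N, hπN⟩
    refine ⟨_, playValue_of_exists_eq_none hend, fun k => ?_⟩
    rw [Finset.sum_apply]
    refine ⟨sum_nonneg fun i _ => nodeProf_nonneg _ k, ?_⟩
    calc ∑ i ∈ range (Nat.find hend), nodeProf A (π i) k
        ≤ ∑ i ∈ range (Nat.find hend), 1 := sum_le_sum fun i _ => nodeProf_le_one _ k
      _ ≤ Fintype.card V := by simpa using (Nat.find_min' hend hπN).trans hN
  have hfin : {q | ∃ π, IsPlay A σ τ s π ∧ q = PlayValue A π}.Finite := by
    refine ((Set.Finite.pi' fun _ => Set.finite_Icc (0 : ℤ) (Fintype.card V)).image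
      Prof.fin).subset fun q hq => ?_
    obtain ⟨P, rfl, hP⟩ := hbounded q hq
    exact ⟨P, hP, rfl⟩
  obtain ⟨π, hπ⟩ := exists_isPlay hσ hτ s
  obtain ⟨M, hM, hmax⟩ := Set.exists_max_image _ id hfin ⟨_, π, hπ, rfl⟩
  obtain ⟨P, rfl, -⟩ := hbounded M hM
  exact ⟨_, ⟨hM, hmax⟩, nofun⟩

theorem Reasonable.playValue_le_of_step_le (hr : Reasonable A σ) (hτ : Strategy1 A τ)
    {W : Option V → Prof d} (hW0 : W none = .fin 0) (hW_ne_bot : ∀ v, W (some v) ≠ .bot)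
    (hW : ∀ x y, PlayStep A σ τ x y → (W y).add (nodeProf A x) ≤ W x)
    {s : V} {π : ℕ → Option V} (hπ : IsPlay A σ τ s π) : PlayValue A π ≤ W (some s) := by
  have hinv {m n : ℕ} (hmn : m ≤ n) :
      (W (π n)).add (∑ i ∈ Ico m n, nodeProf A (π i)) ≤ W (π m) :=
    Prof.add_sum_Ico_le (W := fun n => W (π n)) (fun n => hW _ _ (hπ.2 n)) hmn
  by_cases hend : ∃ n, π n = none
  · have h := hinv (Nat.zero_le (Nat.find hend))
    rw [Nat.find_spec hend, hW0, hπ.1, ← range_eq_Ico] at h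
    rw [playValue_of_exists_eq_none hend]
    simpa [Prof.add] using h
  obtain ⟨m, n, u, hmn, hm, hn⟩ := exists_lt_eq_some_of_ne_none fun n _ hn => hend ⟨n, hn⟩
  have hloop := hinv hmn.le
  rw [hm, hn] at hloop
  have htop : W (some u) = .top := by
    cases h : W (some u) with
    | bot => exact absurd h (hW_ne_bot u)
    | top => rfl
    | fin w =>
      have hlt := (hr.zero_finLt_sum_Ico hτ hπ.2 hmn hm hn).add_right w
      rw [zero_add, _root_.add_comm] at hlt
      rw [h] at hloop
      exact absurd hloop (not_le.mpr hlt)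
  have h := hinv (Nat.zero_le m)
  rw [hm, htop, hπ.1] at h
  exact (Prof.le_top _).trans h

end Values

def greedy (A : PGA V d) (W : Option V → Prof d) (u v : V) : Prop :=
  A.owner u = 1 ∧ A.edge u v ∧ ∀ v', A.edge u v' → W (some v) ≤ W (some v')

theorem strategy1_greedy [Finite V] (A : PGA V d) (W : Option V → Prof d) :
    Strategy1 A (greedy A W) := by
  refine ⟨fun u v h => ⟨h.1, h.2.1⟩, fun u hu => ?_⟩
  obtain ⟨v, hv, hmin⟩ := Set.exists_min_image {v | A.edge u v} (fun v => W (some v))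
    (Set.toFinite _) (A.succ u)
  exact ⟨v, hu, hv, hmin⟩

namespace IsValuation

variable [Fintype V] {A : PGA V d} {σ : V → Option V → Prop} {W : Option V → Prof d}

theorem ne_bot (hW : IsValuation A σ W) (hr : Reasonable A σ) (hσ : Strategy0 A σ) (v : V) :
    W (some v) ≠ .bot := by
  obtain ⟨τ, hτ, hmax⟩ := (hW.2 v).1
  obtain ⟨M, hM, hM_ne_bot⟩ := hr.exists_isMaxOf_playValue hσ hτ v
  intro hbot
  exact hM_ne_bot (le_antisymm (hbot ▸ hmax.le hM.1) (Prof.bot_le M))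

theorem exists_edge_add_le (hW : IsValuation A σ W) (hr : Reasonable A σ) (hσ : Strategy0 A σ)
    {u : V} (hu : A.owner u = 1) :
    ∃ w, A.edge u w ∧ (W (some w)).add (unitProf A u) ≤ W (some u) := by
  obtain ⟨τ, hτ, hmax⟩ := (hW.2 u).1
  obtain ⟨w, hw⟩ := hτ.2 u hu
  obtain ⟨M, hM, -⟩ := hr.exists_isMaxOf_playValue hσ hτ w
  obtain ⟨ρ, hρ, rfl⟩ := hM.1
  let π : ℕ → Option V := fun | 0 => some u | n + 1 => ρ n
  have hπ : IsPlay A σ τ u π := ⟨rfl, fun | 0 => .inr ⟨hu, w, hρ.1, hw⟩ | n + 1 => hρ.2 n⟩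
  refine ⟨w, (hτ.1 u w hw).2, ?_⟩
  calc (W (some w)).add (unitProf A u)
      ≤ (PlayValue A ρ).add (unitProf A u) := Prof.add_le_add_right ((hW.2 w).le ⟨τ, hτ, hM⟩) _
    _ = PlayValue A π := (playValue_eq_tail_add (π := π) rfl).symm
    _ ≤ W (some u) := hmax.le ⟨π, hπ, rfl⟩

theorem add_le_of_playStep_greedy (hW : IsValuation A σ W) (hr : Reasonable A σ)
    (hσ : Strategy0 A σ) {σ' : V → Option V → Prop} (hσ' : Strategy0 A σ')
    (hσ'W : ∀ s t, σ' s t → ¬ StrictImp A W s t) {x y : Option V}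
    (h : PlayStep A σ' (greedy A W) x y) : (W y).add (nodeProf A x) ≤ W x := by
  rcases x with _ | u
  · rw [show y = none from h, nodeProf_none, Prof.add_zero]
  rw [nodeProf_some]
  rcases h with ⟨hu, ht⟩ | ⟨hu, v, rfl, hv⟩
  · exact not_lt.mp fun hlt => hσ'W u y ht ⟨hu, (hσ'.1 u y ht).2, hlt⟩
  · obtain ⟨w, hw, hle⟩ := hW.exists_edge_add_le hr hσ hu
    exact (Prof.add_le_add_right (hv.2.2 w hw) _).trans hle

end IsValuation

/-- If `σ_a, σ_b` are reasonable strategies of player 0 such that no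
strict improvement of `σ_b` lies in `σ_a` (`S_{σ_b} ∩ σ_a = ∅`), then `σ_a ≼ σ_b`,
i.e. `𝒱_{σ_a}(s) ≼ 𝒱_{σ_b}(s)` for all nodes `s`. -/
theorem no_shared_strict_improvement_le {V : Type} {d : ℕ} [Fintype V] (A : PGA V d)
    (σa σb : V → Option V → Prop) (Va Vb : Option V → Prof d)
    (ha : Strategy0 A σa) (hb : Strategy0 A σb)
    (hra : Reasonable A σa) (hrb : Reasonable A σb)
    (hVa : IsValuation A σa Va) (hVb : IsValuation A σb Vb)
    (hdisj : ∀ s t, σa s t → ¬ StrictImp A Vb s t) :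
    ∀ x : Option V, Prof.Le (Va x) (Vb x) := by
  intro x
  show Va x ≤ Vb x
  rcases x with _ | s
  · rw [hVa.1, hVb.1]
  have hτ := strategy1_greedy A Vb
  obtain ⟨M, hM, -⟩ := hra.exists_isMaxOf_playValue ha hτ s
  obtain ⟨π, hπ, rfl⟩ := hM.1
  calc Va (some s) ≤ PlayValue A π := (hVa.2 s).le ⟨_, hτ, hM⟩
    _ ≤ Vb (some s) := hra.playValue_le_of_step_le hτ hVb.1 (hVb.ne_bot hrb hb)
      (fun _ _ => hVb.add_le_of_playStep_greedy hrb hb ha hdisj) hπ
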